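/- If Φ(z) = Σ_{n=0}^N d_n H_{p₀+q₁/2+n}(s z − p₁/2) with coefficients satisfying 2n(n + p₀ + q₁/2) d_n + (p₁(n−1) + p₀p₁ − q₀) d_{n−1} + (n−2+p₀) d_{n−2} = 0 for 2 ≤ n ≤ N (and the corresponding boundary relations at n = 1, N+1, N+2), and p₀ = −N, then Φ solves the biconfluent Heun equation z Φ'' + (p₀ + p₁ s z − 2 s² z²) Φ' + (q₀ s + q₁ s² z) Φ = 0. -/

import Mathlib

/-- Pochhammer symbol `(x)_k` (rising factorial). -/
noncomputable def ascp (x : ℂ) (k : ℕ) : ℂ := (ascPochhammer ℂ k).eval x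

/-- Kummer confluent hypergeometric function `₁F₁(a; b; x)`. -/
noncomputable def F11 (a b x : ℂ) : ℂ :=
  ∑' k : ℕ, ascp a k / ascp b k * x ^ k / (Nat.factorial k : ℂ)

/-- Hermite function of complex degree `ν`. -/
noncomputable def HermiteF (ν x : ℂ) : ℂ :=
  (2 : ℂ) ^ ν * (Real.sqrt Real.pi : ℂ) *
    (F11 (-ν / 2) (1 / 2) (x ^ 2) / Complex.Gamma ((1 - ν) / 2)
      - 2 * x * F11 ((1 - ν) / 2) (3 / 2) (x ^ 2) / Complex.Gamma (-ν / 2))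

/-!
Put `x = s z - p₁/2` and `μₙ = p₀ + q₁/2 + n`. Writing `HermiteF` through `₁F₁`, the contiguous
relations of `₁F₁` and `1/Γ(z) = z/Γ(z+1)` give `H_ν' = 2ν H_{ν-1}` and
`H_{ν+1} = 2x H_ν - 2ν H_{ν-1}`. With these the Heun operator sends `H_{μₙ}(x)` to
`s (-(p₀+n) H_{μₙ+1} + (q₀ - p₁(p₀+n)) H_{μₙ} - 2n μₙ H_{μₙ-1})`. In the sum, the coefficient of
`H_{μₘ}` is `-s` times the recurrence at `n = m + 1`, the boundary relations at `m = 0` and `m = N`,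
and `(N + p₀) d_N = 0` at `m = N + 1`.
-/

open Finset Nat

lemma ascp_succ_right (x : ℂ) (k : ℕ) : ascp x (k + 1) = ascp x k * (x + k) := by
  simp [ascp, ascPochhammer_succ_eval]

lemma ascp_succ_left (x : ℂ) (k : ℕ) : ascp x (k + 1) = x * ascp (x + 1) k := by
  simp [ascp, ascPochhammer_succ_left, Polynomial.eval_comp]

lemma ascp_ne_zero {b : ℂ} (hb : 0 < b.re) (k : ℕ) : ascp b k ≠ 0 := by
  simp only [ascp, ne_eq, ascPochhammer_eval_eq_zero_iff, not_exists, not_and]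
  intro j _ hj
  have := congrArg Complex.re hj
  simp only [Complex.natCast_re, Complex.neg_re] at this
  linarith [j.cast_nonneg (α := ℝ)]

noncomputable def F11Coeff (a b : ℂ) (k : ℕ) : ℂ := ascp a k / ascp b k / k !

lemma F11_eq_tsum (a b x : ℂ) : F11 a b x = ∑' k, F11Coeff a b k * x ^ k :=
  tsum_congr fun k => by rw [F11Coeff]; ring

lemma F11Coeff_zero (a b : ℂ) : F11Coeff a b 0 = 1 := by
  simp [F11Coeff, ascp]

lemma F11Coeff_succ (a : ℂ) {b : ℂ} (hb : 0 < b.re) (k : ℕ) :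
    F11Coeff a b (k + 1) = F11Coeff a b k * ((a + k) / ((b + k) * (k + 1))) := by
  have hbk : b + k ≠ 0 := by
    simpa [ascp_succ_right, ascp_ne_zero hb] using ascp_ne_zero hb (k + 1)
  have := ascp_ne_zero hb k
  rw [F11Coeff, F11Coeff, ascp_succ_right, ascp_succ_right, factorial_succ]
  push_cast
  field_simp

lemma add_one_mul_F11Coeff_succ (a : ℂ) {b : ℂ} (hb : 0 < b.re) (k : ℕ) :
    (k + 1) * F11Coeff a b (k + 1) = a / b * F11Coeff (a + 1) (b + 1) k := by
  have hb0 : b ≠ 0 := by rintro rfl; simp at hb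
  have := ascp_ne_zero (b := b + 1) (by simp; linarith) k
  rw [F11Coeff, F11Coeff, ascp_succ_left a, ascp_succ_left b, factorial_succ]
  push_cast
  field_simp

lemma mul_F11Coeff_add_one_left (a b : ℂ) (k : ℕ) :
    a * F11Coeff (a + 1) b k = (a + k) * F11Coeff a b k := by
  have h := (ascp_succ_left a k).symm.trans (ascp_succ_right a k)
  rw [F11Coeff, F11Coeff, ← mul_div_assoc, ← mul_div_assoc, h, mul_comm (a + k)]
  ring

lemma mul_F11Coeff_eq_add_one_right (a : ℂ) {b : ℂ} (hb : 0 < b.re) (k : ℕ) :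
    b * F11Coeff a b k = (b + k) * F11Coeff a (b + 1) k := by
  have h := (ascp_succ_left b k).symm.trans (ascp_succ_right b k)
  have := ascp_ne_zero hb k
  have := ascp_ne_zero (b := b + 1) (by simp; linarith) k
  have : (k ! : ℂ) ≠ 0 := mod_cast k.factorial_ne_zero
  rw [F11Coeff, F11Coeff]
  field_simp
  linear_combination ascp a k * h

lemma norm_F11Coeff_le (a : ℂ) {b : ℂ} (hb : 0 < b.re) (k : ℕ) :
    ‖F11Coeff a b k‖ ≤ (‖a‖ / b.re + 1) ^ k / k ! := by
  induction k with
  | zero => simp [F11Coeff_zero]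
  | succ k ih =>
    have hbk : b.re + k ≤ ‖b + k‖ := by simpa using Complex.re_le_norm (b + k)
    have hk : (0 : ℝ) ≤ k := k.cast_nonneg
    have hak : ‖a + k‖ ≤ (‖a‖ / b.re + 1) * ‖b + k‖ := calc
      ‖a + k‖ ≤ ‖a‖ + k := by simpa using norm_add_le a (k : ℂ)
      _ ≤ (‖a‖ / b.re + 1) * (b.re + k) := by
        rw [div_add_one hb.ne', div_mul_eq_mul_div, le_div_iff₀ hb]
        nlinarith [norm_nonneg a]
      _ ≤ (‖a‖ / b.re + 1) * ‖b + k‖ := by gcongr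
    have hratio : ‖a + k‖ / (‖b + k‖ * (k + 1)) ≤ (‖a‖ / b.re + 1) / (k + 1) := by
      rw [div_le_div_iff₀ (by nlinarith) (by positivity)]
      nlinarith
    have hnorm : ‖(k : ℂ) + 1‖ = k + 1 := by exact_mod_cast Complex.norm_natCast (k + 1)
    rw [F11Coeff_succ a hb, norm_mul, norm_div, norm_mul, hnorm, pow_succ, factorial_succ]
    calc _ ≤ (‖a‖ / b.re + 1) ^ k / k ! * ((‖a‖ / b.re + 1) / (k + 1)) :=
          mul_le_mul ih hratio (by positivity) (by positivity)
      _ = _ := by push_cast; field_simp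

section ExponentialType

variable {c : ℕ → ℂ} {C : ℝ}

lemma summable_mul_pow_of_norm_le (hc : ∀ n, ‖c n‖ ≤ C ^ n / n !) (x : ℂ) :
    Summable fun n => c n * x ^ n := by
  refine .of_norm_bounded (Real.summable_pow_div_factorial (C * ‖x‖)) fun n => ?_
  rw [norm_mul, norm_pow, mul_pow, mul_div_right_comm]
  exact mul_le_mul_of_nonneg_right (hc n) (by positivity)

lemma hasDerivAt_tsum_mul_pow_of_norm_le (hc : ∀ n, ‖c n‖ ≤ C ^ n / n !) (x : ℂ) :
    HasDerivAt (fun y => ∑' n, c n * y ^ n) (∑' n, (n + 1) * c (n + 1) * x ^ n) x := by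
  obtain ⟨R, hxR⟩ : ∃ R, ‖x‖ < R := ⟨‖x‖ + 1, lt_add_one _⟩
  have hbound : ∀ n, ∀ y ∈ Metric.ball (0 : ℂ) R,
      ‖c n * (n * y ^ (n - 1))‖ ≤ C ^ n / n ! * (n * R ^ (n - 1)) := by
    intro n y hy
    rw [mem_ball_zero_iff] at hy
    rw [norm_mul, norm_mul, norm_pow, Complex.norm_natCast]
    exact mul_le_mul (hc n) (by gcongr) (by positivity) ((norm_nonneg _).trans (hc n))
  have hsum : Summable fun n => C ^ n / n ! * (n * R ^ (n - 1)) := by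
    rw [← summable_nat_add_iff 1]
    refine ((Real.summable_pow_div_factorial (C * R)).mul_left C).congr fun n => ?_
    rw [Nat.add_sub_cancel, factorial_succ]
    push_cast
    field_simp
    ring
  have hx : x ∈ Metric.ball (0 : ℂ) R := mem_ball_zero_iff.2 hxR
  have hderiv := hasDerivAt_tsum_of_isPreconnected hsum Metric.isOpen_ball
    (convex_ball (0 : ℂ) R).isPreconnected
    (fun n y _ => (hasDerivAt_pow n y).const_mul (c n)) hbound hx
    (summable_mul_pow_of_norm_le hc x) hx
  refine hderiv.congr_deriv ?_
  rw [(Summable.of_norm_bounded hsum fun n => hbound n x hx).tsum_eq_zero_add]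
  simp only [CharP.cast_eq_zero, zero_mul, mul_zero, zero_add, Nat.add_sub_cancel]
  push_cast
  exact tsum_congr fun n => by ring

end ExponentialType

lemma summable_F11Coeff_mul_pow (a : ℂ) {b : ℂ} (hb : 0 < b.re) (x : ℂ) :
    Summable fun k => F11Coeff a b k * x ^ k :=
  summable_mul_pow_of_norm_le (norm_F11Coeff_le a hb) x

lemma hasDerivAt_F11 (a : ℂ) {b : ℂ} (hb : 0 < b.re) (x : ℂ) :
    HasDerivAt (F11 a b) (a / b * F11 (a + 1) (b + 1) x) x := by
  rw [funext (F11_eq_tsum a b), F11_eq_tsum, ← tsum_mul_left]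
  refine (hasDerivAt_tsum_mul_pow_of_norm_le (norm_F11Coeff_le a hb) x).congr_deriv ?_
  refine tsum_congr fun k => ?_
  rw [← mul_assoc, ← add_one_mul_F11Coeff_succ a hb]

lemma F11_sub_F11_eq_mul_tsum (a a' : ℂ) {b b' : ℂ} (hb : 0 < b.re) (hb' : 0 < b'.re) (y : ℂ) :
    F11 a b y - F11 a' b' y =
      y * ∑' k, (F11Coeff a b (k + 1) - F11Coeff a' b' (k + 1)) * y ^ k := by
  have hs := summable_F11Coeff_mul_pow a hb y
  have hs' := summable_F11Coeff_mul_pow a' hb' y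
  rw [F11_eq_tsum, F11_eq_tsum, ← hs.tsum_sub hs', (hs.sub hs').tsum_eq_zero_add, ← tsum_mul_left]
  simp only [F11Coeff_zero, sub_self, zero_add]
  exact tsum_congr fun k => by ring

lemma mul_F11_eq_add (a : ℂ) {b : ℂ} (hb : 0 < b.re) (y : ℂ) :
    b * F11 a b y = (b - a) * F11 a (b + 1) y + a * F11 (a + 1) (b + 1) y := by
  have hb1 : 0 < (b + 1).re := by simp; linarith
  rw [F11_eq_tsum, F11_eq_tsum, F11_eq_tsum, ← tsum_mul_left, ← tsum_mul_left, ← tsum_mul_left,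
    ← ((summable_F11Coeff_mul_pow a hb1 y).mul_left _).tsum_add
      ((summable_F11Coeff_mul_pow (a + 1) hb1 y).mul_left _)]
  refine tsum_congr fun k => ?_
  linear_combination y ^ k * (mul_F11Coeff_eq_add_one_right a hb k
    - mul_F11Coeff_add_one_left a (b + 1) k)

lemma F11_sub_F11_sub_one_left (a : ℂ) {b : ℂ} (hb : 0 < b.re) (y : ℂ) :
    F11 a b y - F11 (a - 1) b y = y / b * F11 a (b + 1) y := by
  rw [F11_sub_F11_eq_mul_tsum _ _ hb hb, F11_eq_tsum, ← tsum_mul_left, ← tsum_mul_left]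
  refine tsum_congr fun k => mul_left_cancel₀ k.cast_add_one_ne_zero ?_
  have h₁ := add_one_mul_F11Coeff_succ a hb k
  have h₂ := add_one_mul_F11Coeff_succ (a - 1) hb k
  rw [sub_add_cancel] at h₂
  linear_combination y * y ^ k * (h₁ - h₂) + y * y ^ k / b * mul_F11Coeff_add_one_left a (b + 1) k

lemma F11_sub_F11_add_one_right (a : ℂ) {b : ℂ} (hb : 0 < b.re) (y : ℂ) :
    F11 a b y - F11 a (b + 1) y = a * y / (b * (b + 1)) * F11 (a + 1) (b + 2) y := by
  have hb1 : 0 < (b + 1).re := by simp; linarith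
  have hb1' : b + 1 ≠ 0 := by rintro h; simp [h] at hb1
  rw [F11_sub_F11_eq_mul_tsum _ _ hb hb1, F11_eq_tsum, ← tsum_mul_left, ← tsum_mul_left]
  refine tsum_congr fun k => mul_left_cancel₀ k.cast_add_one_ne_zero ?_
  have h₁ := add_one_mul_F11Coeff_succ a hb k
  have h₂ := add_one_mul_F11Coeff_succ a hb1 k
  have h₃ := mul_F11Coeff_eq_add_one_right (a + 1) hb1 k
  rw [show b + 1 + 1 = b + 2 by ring] at h₂ h₃
  have hb0 : b ≠ 0 := by rintro rfl; simp at hb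
  linear_combination (norm := (field_simp; ring))
    y * y ^ k * (h₁ - h₂) + a * y * y ^ k / (b * (b + 1)) * h₃

lemma half_re_pos : 0 < (1 / 2 : ℂ).re := by norm_num

lemma hermiteF_add_one (ν x : ℂ) :
    HermiteF (ν + 1) x = 2 * x * HermiteF ν x - 2 * ν * HermiteF (ν - 1) x := by
  have hI1 := F11_sub_F11_sub_one_left ((1 - ν) / 2) half_re_pos (x ^ 2)
  have hI2 := mul_F11_eq_add (-ν / 2) half_re_pos (x ^ 2)
  have hΓα := Complex.one_div_Gamma_eq_self_mul_one_div_Gamma_add_one ((1 - ν) / 2 - 1)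
  have hΓβ := Complex.one_div_Gamma_eq_self_mul_one_div_Gamma_add_one (-ν / 2)
  rw [show (1 / 2 : ℂ) + 1 = 3 / 2 by norm_num] at hI1 hI2
  rw [show (1 - ν) / 2 - 1 + 1 = (1 - ν) / 2 by ring] at hΓα
  simp only [HermiteF]
  rw [show -(ν + 1) / 2 = (1 - ν) / 2 - 1 by ring, show (1 - (ν + 1)) / 2 = -ν / 2 by ring,
    show -(ν - 1) / 2 = (1 - ν) / 2 by ring, show (1 - (ν - 1)) / 2 = -ν / 2 + 1 by ring,
    Complex.cpow_add _ _ two_ne_zero, Complex.cpow_sub _ _ two_ne_zero, Complex.cpow_one]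
  set c := (2 : ℂ) ^ ν * (Real.sqrt Real.pi : ℂ)
  linear_combination (-4 * c * x * F11 (-ν / 2) (3 / 2) (x ^ 2)) * hΓα
    + (2 * c * F11 ((1 - ν) / 2 - 1) (1 / 2) (x ^ 2)
      + 4 * c * x ^ 2 * F11 ((1 - ν) / 2) (3 / 2) (x ^ 2)) * hΓβ
    + c * ν * (Complex.Gamma (-ν / 2 + 1))⁻¹ * hI1
    - 4 * c * x * (Complex.Gamma ((1 - ν) / 2))⁻¹ * hI2

lemma hasDerivAt_hermiteF (ν x : ℂ) :
    HasDerivAt (HermiteF ν) (2 * ν * HermiteF (ν - 1) x) x := by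
  have hsq := hasDerivAt_pow 2 x
  have h₁ := (hasDerivAt_F11 (-ν / 2) half_re_pos (x ^ 2)).comp x hsq
  have h₂ := (hasDerivAt_F11 ((1 - ν) / 2) (by norm_num : 0 < (3 / 2 : ℂ).re) (x ^ 2)).comp x hsq
  have h := ((h₁.div_const (Complex.Gamma ((1 - ν) / 2))).sub
    ((((hasDerivAt_id x).const_mul 2).mul h₂).div_const (Complex.Gamma (-ν / 2)))).const_mul
    ((2 : ℂ) ^ ν * (Real.sqrt Real.pi : ℂ))
  refine h.congr_deriv ?_
  have hI3 := F11_sub_F11_add_one_right ((1 - ν) / 2) half_re_pos (x ^ 2)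
  have hΓβ := Complex.one_div_Gamma_eq_self_mul_one_div_Gamma_add_one (-ν / 2)
  rw [show (1 / 2 : ℂ) + 1 = 3 / 2 by norm_num, show (1 / 2 : ℂ) + 2 = 5 / 2 by norm_num] at hI3
  simp only [HermiteF, Function.comp_apply, id, Nat.cast_ofNat, pow_one, Nat.add_one_sub_one]
  rw [show -(ν - 1) / 2 = (1 - ν) / 2 by ring, show (1 - (ν - 1)) / 2 = -ν / 2 + 1 by ring,
    show (1 / 2 : ℂ) + 1 = 3 / 2 by norm_num, show (3 / 2 : ℂ) + 1 = 5 / 2 by norm_num,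
    Complex.cpow_sub _ _ two_ne_zero, Complex.cpow_one]
  set c := (2 : ℂ) ^ ν * (Real.sqrt Real.pi : ℂ)
  linear_combination (-c * (2 * F11 ((1 - ν) / 2) (3 / 2) (x ^ 2)
      + 8 * ((1 - ν) / 2) / 3 * x ^ 2 * F11 ((1 - ν) / 2 + 1) (5 / 2) (x ^ 2))) * hΓβ
    - c * ν * (Complex.Gamma (-ν / 2 + 1))⁻¹ * hI3

lemma hasDerivAt_sum_hermiteF (K : ℕ) (d μ : ℕ → ℂ) (s c z : ℂ) :
    HasDerivAt (fun z => ∑ n ∈ range K, d n * HermiteF (μ n) (s * z - c))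
      (∑ n ∈ range K, d n * (2 * μ n * s) * HermiteF (μ n - 1) (s * z - c)) z := by
  refine HasDerivAt.fun_sum fun n _ => ?_
  have h := (hasDerivAt_hermiteF (μ n) (s * z - c)).comp z
    (((hasDerivAt_id z).const_mul s).sub_const c)
  exact (h.const_mul (d n)).congr_deriv (by ring)

lemma bhe_hermiteF (p₀ p₁ q₀ q₁ s μ z : ℂ) :
    z * (2 * μ * s * (2 * (μ - 1) * s) * HermiteF (μ - 1 - 1) (s * z - p₁ / 2))
      + (p₀ + p₁ * s * z - 2 * s ^ 2 * z ^ 2) * (2 * μ * s * HermiteF (μ - 1) (s * z - p₁ / 2))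
      + (q₀ * s + q₁ * s ^ 2 * z) * HermiteF μ (s * z - p₁ / 2)
    = s * ((q₁ / 2 - μ) * HermiteF (μ + 1) (s * z - p₁ / 2)
      + (q₀ + q₁ * p₁ / 2 - μ * p₁) * HermiteF μ (s * z - p₁ / 2)
      - 2 * μ * (μ - p₀ - q₁ / 2) * HermiteF (μ - 1) (s * z - p₁ / 2)) := by
  have h₁ := hermiteF_add_one μ (s * z - p₁ / 2)
  have h₂ := hermiteF_add_one (μ - 1) (s * z - p₁ / 2)
  rw [sub_add_cancel] at h₂
  linear_combination s * (μ - q₁ / 2) * h₁ + 2 * μ * s ^ 2 * z * h₂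

lemma bhe_sum_hermiteF (K : ℕ) (d μ : ℕ → ℂ) (p₀ p₁ q₀ q₁ s z : ℂ) (Φ : ℂ → ℂ)
    (hΦ : Φ = fun z => ∑ n ∈ range K, d n * HermiteF (μ n) (s * z - p₁ / 2)) :
    z * deriv (deriv Φ) z + (p₀ + p₁ * s * z - 2 * s ^ 2 * z ^ 2) * deriv Φ z
      + (q₀ * s + q₁ * s ^ 2 * z) * Φ z
    = ∑ n ∈ range K, s * d n * ((q₁ / 2 - μ n) * HermiteF (μ n + 1) (s * z - p₁ / 2)
      + (q₀ + q₁ * p₁ / 2 - μ n * p₁) * HermiteF (μ n) (s * z - p₁ / 2)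
      - 2 * μ n * (μ n - p₀ - q₁ / 2) * HermiteF (μ n - 1) (s * z - p₁ / 2)) := by
  have h₁ : deriv Φ = fun z =>
      ∑ n ∈ range K, d n * (2 * μ n * s) * HermiteF (μ n - 1) (s * z - p₁ / 2) := by
    subst hΦ
    exact funext fun z => (hasDerivAt_sum_hermiteF K d μ s _ z).deriv
  have h₂ : deriv (deriv Φ) z = ∑ n ∈ range K,
      d n * (2 * μ n * s) * (2 * (μ n - 1) * s) * HermiteF (μ n - 1 - 1) (s * z - p₁ / 2) := by
    rw [h₁]
    exact (hasDerivAt_sum_hermiteF K (fun n => d n * (2 * μ n * s)) (fun n => μ n - 1) s _ z).deriv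
  rw [h₂, h₁, hΦ]
  simp only [mul_sum, ← sum_add_distrib]
  exact sum_congr rfl fun n _ => by linear_combination d n * bhe_hermiteF p₀ p₁ q₀ q₁ s (μ n) z

-- `X` is indexed by `ℤ` so that `X (n - 1)` is a genuine shift at `n = 0`.
theorem sum_tridiagonal_eq_zero {R : Type*} [CommRing R] (M : ℕ) (a b c : ℕ → R) (X : ℤ → R)
    (hc₀ : c 0 = 0) (h₀ : b 0 + c 1 = 0) (hmid : ∀ m < M, a m + b (m + 1) + c (m + 2) = 0)
    (htop : a M + b (M + 1) = 0) (hlast : a (M + 1) = 0) :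
    ∑ n ∈ range (M + 2), (a n * X (n + 1) + b n * X n + c n * X (n - 1)) = 0 := by
  have ha : ∑ n ∈ range (M + 2), a n * X (n + 1) =
      ∑ m ∈ range M, a m * X (m + 1) + a M * X (M + 1) + a (M + 1) * X (M + 1 + 1) := by
    rw [sum_range_succ, sum_range_succ]; push_cast; ring
  have hb : ∑ n ∈ range (M + 2), b n * X n =
      b 0 * X 0 + ∑ m ∈ range M, b (m + 1) * X (m + 1) + b (M + 1) * X (M + 1) := by
    rw [sum_range_succ', sum_range_succ]; push_cast; ring
  have hc : ∑ n ∈ range (M + 2), c n * X (n - 1) =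
      c 0 * X (-1) + c 1 * X 0 + ∑ m ∈ range M, c (m + 2) * X (m + 1) := by
    rw [sum_range_succ', sum_range_succ']
    simp only [Nat.cast_add, Nat.cast_one, Nat.cast_zero, add_sub_cancel_right, zero_sub]
    ring
  have hsum : ∑ m ∈ range M, a m * X (m + 1) + ∑ m ∈ range M, b (m + 1) * X (m + 1)
      + ∑ m ∈ range M, c (m + 2) * X (m + 1) = 0 := by
    rw [← sum_add_distrib, ← sum_add_distrib]
    refine sum_eq_zero fun m hm => ?_
    linear_combination X (m + 1) * hmid m (mem_range.1 hm)
  rw [sum_add_distrib, sum_add_distrib, ha, hb, hc]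
  linear_combination hsum + X (-1) * hc₀ + X 0 * h₀ + X (M + 1) * htop + X (M + 1 + 1) * hlast

theorem bhe_hermite_sum_solution_general (N : ℕ) (hN : 1 ≤ N) (p₀ p₁ q₀ q₁ s : ℂ)
    (hp₀ : p₀ = -(N : ℂ)) (d : ℕ → ℂ)
    (hrec : ∀ n : ℕ, 2 ≤ n → n ≤ N →
      2 * (n : ℂ) * ((n : ℂ) + p₀ + q₁ / 2) * d n
        + (p₁ * ((n : ℂ) - 1) + p₀ * p₁ - q₀) * d (n - 1)
        + ((n : ℂ) - 2 + p₀) * d (n - 2) = 0)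
    (hb1 : 2 * (1 + p₀ + q₁ / 2) * d 1 + (p₀ * p₁ - q₀) * d 0 = 0)
    (hbN1 : (p₁ * (N : ℂ) + p₀ * p₁ - q₀) * d N + ((N : ℂ) - 1 + p₀) * d (N - 1) = 0)
    (Φ : ℂ → ℂ)
    (hΦ : Φ = fun z =>
      ∑ n ∈ Finset.range (N + 1), d n * HermiteF (p₀ + q₁ / 2 + n) (s * z - p₁ / 2)) :
    ∀ z : ℂ, z * deriv (deriv Φ) z + (p₀ + p₁ * s * z - 2 * s ^ 2 * z ^ 2) * deriv Φ z
      + (q₀ * s + q₁ * s ^ 2 * z) * Φ z = 0 := by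
  obtain ⟨M, rfl⟩ : ∃ M, N = M + 1 := ⟨N - 1, by omega⟩
  intro z
  let X : ℤ → ℂ := fun m => HermiteF (p₀ + q₁ / 2 + m) (s * z - p₁ / 2)
  rw [bhe_sum_hermiteF (M + 2) d (fun n => p₀ + q₁ / 2 + n) p₀ p₁ q₀ q₁ s z Φ hΦ]
  calc
    _ = ∑ n ∈ range (M + 2), (-s * (p₀ + n) * d n * X (n + 1)
        + s * (q₀ - p₁ * (p₀ + n)) * d n * X n
        + -2 * s * n * (p₀ + q₁ / 2 + n) * d n * X (n - 1)) := by
      refine sum_congr rfl fun n _ => ?_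
      simp only [X, Int.cast_add, Int.cast_sub, Int.cast_natCast, Int.cast_one, ← add_assoc,
        ← add_sub_assoc]
      ring
    _ = 0 := by
      refine sum_tridiagonal_eq_zero M _ _ _ X (by simp) ?_ (fun m hm => ?_) ?_ ?_
      · push_cast; linear_combination -s * hb1
      · have h := hrec (m + 2) (by omega) (by omega)
        simp only [Nat.add_sub_cancel] at h
        push_cast at h ⊢
        linear_combination -s * h
      · simp only [Nat.add_sub_cancel] at hbN1
        push_cast at hbN1 ⊢
        linear_combination -s * hbN1
      · push_cast at hp₀ ⊢
        linear_combination -s * d (M + 1) * hp₀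

/-- a terminated Hermite-function series with `p₀ = −N` and coefficients
obeying the recurrence (14) and the boundary relations solves the biconfluent Heun equation. -/
theorem bhe_hermite_sum_solution (N : ℕ) (hN : 1 ≤ N) (p₀ p₁ q₀ q₁ s : ℂ) (hs : s ≠ 0)
    (hp₀ : p₀ = -(N : ℂ)) (d : ℕ → ℂ)
    (hrec : ∀ n : ℕ, 2 ≤ n → n ≤ N →
      2 * (n : ℂ) * ((n : ℂ) + p₀ + q₁ / 2) * d n
        + (p₁ * ((n : ℂ) - 1) + p₀ * p₁ - q₀) * d (n - 1)
        + ((n : ℂ) - 2 + p₀) * d (n - 2) = 0)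
    (hb1 : 2 * (1 + p₀ + q₁ / 2) * d 1 + (p₀ * p₁ - q₀) * d 0 = 0)
    (hbN1 : (p₁ * (N : ℂ) + p₀ * p₁ - q₀) * d N + ((N : ℂ) - 1 + p₀) * d (N - 1) = 0)
    (Φ : ℂ → ℂ)
    (hΦ : Φ = fun z =>
      ∑ n ∈ Finset.range (N + 1), d n * HermiteF (p₀ + q₁ / 2 + n) (s * z - p₁ / 2)) :
    ∀ z : ℂ, z * deriv (deriv Φ) z + (p₀ + p₁ * s * z - 2 * s ^ 2 * z ^ 2) * deriv Φ z
      + (q₀ * s + q₁ * s ^ 2 * z) * Φ z = 0 :=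
  bhe_hermite_sum_solution_general N hN p₀ p₁ q₀ q₁ s hp₀ d hrec hb1 hbN1 Φ hΦ
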